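/- arXiv:2002.03636 — 5 statements merged into one kernel-verified Lean document; each statement's English description precedes it below -/
import Mathlib

section
/- Let k ≥ 0 and let (ΔN_t)_{t>k} be a martingale difference sequence adapted to a filtration (F_t)_{t≥k} (each ΔN_t is F_t-measurable and E[ΔN_t | F_{t−1}] = 0 almost surely) such that E[ΔN_t² | F_{t−1}] < ∞ almost surely for every t > k. Then for any δ > 0 and λ > 0, with probability at least 1 − δ, simultaneously for all n ≥ 1: Σ_{t=k+1}^{k+n} ( ΔN_t − (λ/2)·(ΔN_t² + E[ΔN_t² | F_{t−1}]) ) ≤ ln(1/δ)/λ. -/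
/-!
Exponentiating the compensated partial sums gives a nonnegative supermartingale
`Zₙ = exp (λ Sₙ)` started at `1`: by the elementary bound `exp (x - x²/2) ≤ 1 + x + x²/2`,
one increment multiplies the conditional mean by at most
`exp (-λ² V/2) (1 + λ² V/2) ≤ 1`, where `V` is the conditional variance.
Ville's maximal inequality then bounds the probability that `Zₙ` ever reaches `1/δ` by `δ`.
-/

open MeasureTheory ProbabilityTheory Real Finset

theorem Real.one_le_one_add_add_sq_div_two_mul_exp (x : ℝ) :
    1 ≤ (1 + x + x ^ 2 / 2) * exp (x ^ 2 / 2 - x) := by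
  let G : ℝ → ℝ := fun x => (1 + x + x ^ 2 / 2) * exp (x ^ 2 / 2 - x)
  have hG : ∀ x, HasDerivAt G (x * (x ^ 2 + x + 2) / 2 * exp (x ^ 2 / 2 - x)) x := fun x => by
    have hp : HasDerivAt (fun x : ℝ => 1 + x + x ^ 2 / 2) (1 + x) x :=
      (((hasDerivAt_id x).const_add 1).add ((hasDerivAt_pow 2 x).div_const 2)).congr_deriv
        (by simp)
    have he : HasDerivAt (fun x : ℝ => exp (x ^ 2 / 2 - x)) (exp (x ^ 2 / 2 - x) * (x - 1)) x := by
      simpa using (((hasDerivAt_pow 2 x).div_const 2).sub (hasDerivAt_id x)).exp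
    exact (hp.mul he).congr_deriv (by ring)
  have hquad : ∀ x : ℝ, 0 < x ^ 2 + x + 2 := fun x => by nlinarith [sq_nonneg (x + 1 / 2)]
  have hcont : Continuous G := continuous_iff_continuousAt.2 fun x => (hG x).continuousAt
  have hmono : MonotoneOn G (Set.Ici 0) :=
    monotoneOn_of_deriv_nonneg (convex_Ici 0) hcont.continuousOn
      (fun x _ => (hG x).differentiableAt.differentiableWithinAt) fun x hx => by
        rw [interior_Ici] at hx
        have : (0 : ℝ) < x := hx
        have := hquad x
        rw [(hG x).deriv]
        positivity
  have hanti : AntitoneOn G (Set.Iic 0) :=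
    antitoneOn_of_deriv_nonpos (convex_Iic 0) hcont.continuousOn
      (fun x _ => (hG x).differentiableAt.differentiableWithinAt) fun x hx => by
        rw [interior_Iic] at hx
        rw [(hG x).deriv]
        exact mul_nonpos_of_nonpos_of_nonneg (div_nonpos_of_nonpos_of_nonneg
          (mul_nonpos_of_nonpos_of_nonneg hx.le (hquad x).le) zero_le_two) (exp_pos _).le
  have hG0 : G 0 = 1 := by simp [G]
  rcases le_total 0 x with hx | hx
  · exact hG0.symm.trans_le (hmono Set.self_mem_Ici hx hx)
  · exact hG0.symm.trans_le (hanti hx Set.self_mem_Iic hx)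

theorem Real.exp_sub_sq_div_two_le (x : ℝ) : exp (x - x ^ 2 / 2) ≤ 1 + x + x ^ 2 / 2 := by
  have hprod : exp (x - x ^ 2 / 2) * exp (x ^ 2 / 2 - x) = 1 := by
    rw [← exp_add]; simp
  by_contra! h
  have := mul_lt_mul_of_pos_right h (exp_pos (x ^ 2 / 2 - x))
  rw [hprod] at this
  exact (one_le_one_add_add_sq_div_two_mul_exp x).not_gt this

section

variable {Ω : Type*} {m0 : MeasurableSpace Ω} {μ : Measure Ω}

theorem integrable_exp_of_ae_le [IsFiniteMeasure μ] {f : Ω → ℝ} (hf : AEStronglyMeasurable f μ)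
    {c : ℝ} (hfc : ∀ᵐ ω ∂μ, f ω ≤ c) : Integrable (fun ω => exp (f ω)) μ :=
  .of_bound (continuous_exp.comp_aestronglyMeasurable hf) (exp c) <| by
    filter_upwards [hfc] with ω hω
    rw [norm_of_nonneg (exp_pos _).le]
    exact exp_le_exp.2 hω

theorem integrable_exp_mul_sub_sq [IsFiniteMeasure μ] {X : Ω → ℝ}
    (hX : AEStronglyMeasurable X μ) (lam : ℝ) :
    Integrable (fun ω => exp (lam * X ω - lam ^ 2 / 2 * X ω ^ 2)) μ :=
  integrable_exp_of_ae_le (c := 1 / 2) (by fun_prop)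
    (.of_forall fun ω => by nlinarith [sq_nonneg (lam * X ω - 1)])

theorem condExp_exp_mul_sub_sq_le [IsFiniteMeasure μ] {m : MeasurableSpace Ω} (hm : m ≤ m0)
    {X : Ω → ℝ} (hX : Integrable X μ) (hX2 : Integrable (fun ω => X ω ^ 2) μ)
    (hmart : μ[X|m] =ᵐ[μ] 0) (lam : ℝ) :
    μ[fun ω => exp (lam * X ω - lam ^ 2 / 2 * X ω ^ 2)|m]
      ≤ᵐ[μ] fun ω => 1 + lam ^ 2 / 2 * μ[fun ω => X ω ^ 2|m] ω := by
  set P : Ω → ℝ := (fun _ => 1) + lam • X + (lam ^ 2 / 2) • fun ω => X ω ^ 2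
  have hP_int : Integrable P μ := ((integrable_const 1).add (hX.smul lam)).add (hX2.smul _)
  have hexp_le : ∀ ω, exp (lam * X ω - lam ^ 2 / 2 * X ω ^ 2) ≤ P ω := fun ω => by
    have e : lam * X ω - lam ^ 2 / 2 * X ω ^ 2 = lam * X ω - (lam * X ω) ^ 2 / 2 := by ring
    simpa only [e, P, Pi.add_apply, Pi.smul_apply, smul_eq_mul, mul_pow, mul_div_right_comm]
      using exp_sub_sq_div_two_le (lam * X ω)
  have hP : μ[P|m] =ᵐ[μ]
      μ[fun _ => 1|m] + lam • μ[X|m] + (lam ^ 2 / 2) • μ[fun ω => X ω ^ 2|m] :=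
    (condExp_add ((integrable_const 1).add (hX.smul lam)) (hX2.smul _) m).trans <|
      ((condExp_add (integrable_const 1) (hX.smul lam) m).trans
        (Filter.EventuallyEq.rfl.add (condExp_smul lam X m))).add (condExp_smul _ _ m)
  filter_upwards [condExp_mono (m := m) (integrable_exp_mul_sub_sq hX.1 lam) hP_int
    (.of_forall hexp_le), hP, hmart] with ω hle hP hX0
  simpa [hP, hX0, condExp_const hm] using hle

noncomputable def bernsteinIncrement (μ : Measure Ω) (m : MeasurableSpace Ω) (lam : ℝ)
    (X : Ω → ℝ) (ω : Ω) : ℝ :=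
  X ω - lam / 2 * (X ω ^ 2 + μ[fun ω' => X ω' ^ 2|m] ω)

theorem MeasureTheory.StronglyMeasurable.bernsteinIncrement {m m' : MeasurableSpace Ω}
    (hm : m ≤ m') {X : Ω → ℝ} (hX : StronglyMeasurable[m'] X) (lam : ℝ) :
    StronglyMeasurable[m'] (bernsteinIncrement μ m lam X) :=
  hX.sub (((hX.pow 2).add (stronglyMeasurable_condExp.mono hm)).const_mul _)

theorem ae_mul_bernsteinIncrement_le_half (m : MeasurableSpace Ω) (lam : ℝ) (X : Ω → ℝ) :
    ∀ᵐ ω ∂μ, lam * bernsteinIncrement μ m lam X ω ≤ 1 / 2 := by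
  filter_upwards [condExp_nonneg (μ := μ) (m := m) (.of_forall fun ω => sq_nonneg (X ω))]
    with ω hV
  have := mul_nonneg (sq_nonneg lam) hV
  simp only [bernsteinIncrement]
  nlinarith [sq_nonneg (lam * X ω - 1)]

theorem integrable_exp_mul_bernsteinIncrement [IsFiniteMeasure μ] (m : MeasurableSpace Ω)
    {X : Ω → ℝ} (hX : AEStronglyMeasurable[m0] X μ) (lam : ℝ) :
    Integrable (fun ω => exp (lam * bernsteinIncrement μ m lam X ω)) μ :=
  integrable_exp_of_ae_le
    (((hX.sub (((hX.pow 2).add integrable_condExp.1).const_mul _))).const_mul lam)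
    (ae_mul_bernsteinIncrement_le_half m lam X)

theorem condExp_exp_mul_bernsteinIncrement_le_one [IsFiniteMeasure μ] {m : MeasurableSpace Ω}
    (hm : m ≤ m0) {X : Ω → ℝ} (hX : Integrable X μ) (hX2 : Integrable (fun ω => X ω ^ 2) μ)
    (hmart : μ[X|m] =ᵐ[μ] 0) (lam : ℝ) :
    μ[fun ω => exp (lam * bernsteinIncrement μ m lam X ω)|m] ≤ᵐ[μ] 1 := by
  set V := μ[fun ω => X ω ^ 2|m]
  have hsplit : (fun ω => exp (lam * bernsteinIncrement μ m lam X ω)) =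
      (fun ω => exp (-(lam ^ 2 / 2 * V ω))) *
        fun ω => exp (lam * X ω - lam ^ 2 / 2 * X ω ^ 2) := by
    ext ω
    simp only [Pi.mul_apply, ← exp_add, bernsteinIncrement, V]
    ring_nf
  have hinc_int := integrable_exp_mul_bernsteinIncrement m hX.1 lam
  rw [hsplit] at hinc_int ⊢
  filter_upwards [condExp_mul_of_stronglyMeasurable_left (by fun_prop) hinc_int
      (integrable_exp_mul_sub_sq hX.1 lam),
    condExp_exp_mul_sub_sq_le hm hX hX2 hmart lam] with ω hpull hle
  rw [hpull, Pi.mul_apply, Pi.one_apply]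
  calc exp (-(lam ^ 2 / 2 * V ω)) * μ[_|m] ω
      ≤ exp (-(lam ^ 2 / 2 * V ω)) * (1 + lam ^ 2 / 2 * V ω) := by gcongr
    _ ≤ exp (-(lam ^ 2 / 2 * V ω)) * exp (lam ^ 2 / 2 * V ω) := by
        gcongr
        linarith [add_one_le_exp (lam ^ 2 / 2 * V ω)]
    _ = 1 := by rw [← exp_add]; simp

/-- `X i` is the increment from time `i` to time `i + 1`, so its compensator is conditioned
on `𝒢 i`. -/
noncomputable def bernsteinSum (μ : Measure Ω) (𝒢 : Filtration ℕ m0) (lam : ℝ)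
    (X : ℕ → Ω → ℝ) (n : ℕ) (ω : Ω) : ℝ :=
  ∑ i ∈ range n, bernsteinIncrement μ (𝒢 i) lam (X i) ω

theorem supermartingale_exp_mul_bernsteinSum [IsFiniteMeasure μ] {𝒢 : Filtration ℕ m0}
    {X : ℕ → Ω → ℝ} (hadapt : ∀ i, StronglyMeasurable[𝒢 (i + 1)] (X i))
    (hint : ∀ i, Integrable (X i) μ) (hint2 : ∀ i, Integrable (fun ω => X i ω ^ 2) μ)
    (hmart : ∀ i, μ[X i|𝒢 i] =ᵐ[μ] 0) (lam : ℝ) :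
    Supermartingale (fun n ω => exp (lam * bernsteinSum μ 𝒢 lam X n ω)) 𝒢 μ := by
  have hsum_sm : ∀ n, StronglyMeasurable[𝒢 n] (bernsteinSum μ 𝒢 lam X n) := fun n =>
    Finset.stronglyMeasurable_fun_sum _ fun i hi =>
      ((hadapt i).bernsteinIncrement (𝒢.mono i.le_succ) lam).mono (𝒢.mono (mem_range.1 hi))
  have hZ_sm : ∀ n, StronglyMeasurable[𝒢 n] fun ω => exp (lam * bernsteinSum μ 𝒢 lam X n ω) :=
    fun n => continuous_exp.comp_stronglyMeasurable ((hsum_sm n).const_mul lam)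
  have hZ_int : ∀ n, Integrable (fun ω => exp (lam * bernsteinSum μ 𝒢 lam X n ω)) μ := fun n => by
    refine integrable_exp_of_ae_le (c := n / 2)
      (((hsum_sm n).mono (𝒢.le n)).aestronglyMeasurable.const_mul lam) ?_
    filter_upwards [ae_all_iff.2 fun i =>
      ae_mul_bernsteinIncrement_le_half (μ := μ) (𝒢 i) lam (X i)] with ω hω
    rw [bernsteinSum, mul_sum]
    refine (sum_le_sum fun i _ => hω i).trans ?_
    simp [div_eq_mul_inv]
  have hZ_succ : ∀ n, (fun ω => exp (lam * bernsteinSum μ 𝒢 lam X (n + 1) ω)) =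
      (fun ω => exp (lam * bernsteinSum μ 𝒢 lam X n ω)) *
        fun ω => exp (lam * bernsteinIncrement μ (𝒢 n) lam (X n) ω) := fun n => by
    ext ω
    rw [bernsteinSum, sum_range_succ, mul_add, exp_add]
    rfl
  refine supermartingale_nat hZ_sm hZ_int fun n => ?_
  rw [hZ_succ]
  filter_upwards [condExp_mul_of_stronglyMeasurable_left (hZ_sm n) (hZ_succ n ▸ hZ_int (n + 1))
      (integrable_exp_mul_bernsteinIncrement (𝒢 n) (hint n).1 lam),
    condExp_exp_mul_bernsteinIncrement_le_one (𝒢.le n) (hint n) (hint2 n) (hmart n) lam]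
    with ω hpull hle
  rw [hpull, Pi.mul_apply]
  exact mul_le_of_le_one_right (exp_pos _).le hle

section Ville

variable [IsFiniteMeasure μ] {𝒢 : Filtration ℕ m0} {Z : ℕ → Ω → ℝ}

/-- Stop `Z` when it first reaches `ε`; optional stopping bounds the mean of the stopped value. -/
theorem MeasureTheory.Supermartingale.maximal_ineq (hZ : Supermartingale Z 𝒢 μ) (hnonneg : 0 ≤ Z)
    {ε : ℝ} (hε : 0 ≤ ε) (N : ℕ) :
    ε * μ.real {ω | ∃ n ≤ N, ε ≤ Z n ω} ≤ ∫ ω, Z 0 ω ∂μ := by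
  let τ : Ω → WithTop ℕ := fun ω => (hittingBtwn Z (Set.Ici ε) 0 N ω : ℕ)
  have hτ : IsStoppingTime 𝒢 τ :=
    hZ.stronglyAdapted.adapted.isStoppingTime_hittingBtwn measurableSet_Ici
  have hτN : ∀ ω, τ ω ≤ N := fun ω => WithTop.coe_le_coe.2 (hittingBtwn_le ω)
  have hsub : {ω | ∃ n ≤ N, ε ≤ Z n ω} ⊆ {ω | ε ≤ stoppedValue Z τ ω} :=
    fun ω ⟨n, hnN, hn⟩ => stoppedValue_hittingBtwn_mem ⟨n, ⟨n.zero_le, hnN⟩, hn⟩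
  have hopt : ∫ ω, stoppedValue Z τ ω ∂μ ≤ ∫ ω, Z 0 ω ∂μ := by
    have := hZ.neg.expected_stoppedValue_mono (isStoppingTime_const 𝒢 0) hτ
      (fun ω => WithTop.coe_le_coe.2 (Nat.zero_le _)) hτN
    simpa [stoppedValue, integral_neg] using this
  calc ε * μ.real {ω | ∃ n ≤ N, ε ≤ Z n ω}
      ≤ ε * μ.real {ω | ε ≤ stoppedValue Z τ ω} :=
        mul_le_mul_of_nonneg_left (measureReal_mono hsub (measure_ne_top μ _)) hε
    _ ≤ ∫ ω, stoppedValue Z τ ω ∂μ :=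
      mul_meas_ge_le_integral_of_nonneg (.of_forall fun ω => hnonneg _ _)
        (integrable_stoppedValue ℕ hτ hZ.integrable hτN) ε
    _ ≤ ∫ ω, Z 0 ω ∂μ := hopt

theorem MeasureTheory.Supermartingale.measure_exists_ge_le (hZ : Supermartingale Z 𝒢 μ)
    (hnonneg : 0 ≤ Z) {ε : ℝ} (hε : 0 < ε) :
    μ {ω | ∃ n, ε ≤ Z n ω} ≤ ENNReal.ofReal ((∫ ω, Z 0 ω ∂μ) / ε) := by
  have hunion : {ω | ∃ n, ε ≤ Z n ω} = ⋃ N, {ω | ∃ n ≤ N, ε ≤ Z n ω} := by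
    ext ω
    simp only [Set.mem_ofPred_eq, Set.mem_iUnion]
    exact ⟨fun ⟨n, hn⟩ => ⟨n, n, le_rfl, hn⟩, fun ⟨_, n, _, hn⟩ => ⟨n, hn⟩⟩
  have hmono : Monotone fun N => {ω | ∃ n ≤ N, ε ≤ Z n ω} :=
    fun _ _ hMN _ ⟨n, hnM, hn⟩ => ⟨n, hnM.trans hMN, hn⟩
  rw [hunion, hmono.measure_iUnion]
  refine iSup_le fun N => ?_
  rw [← ofReal_measureReal]
  exact ENNReal.ofReal_le_ofReal ((le_div_iff₀' hε).2 (hZ.maximal_ineq hnonneg hε.le N))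

end Ville

theorem ofReal_one_sub_le_measure_of_compl_subset [IsProbabilityMeasure μ] {A B : Set Ω}
    {δ : ℝ} (hδ : 0 ≤ δ) (hB : μ B ≤ ENNReal.ofReal δ) (hBA : Bᶜ ⊆ A) :
    ENNReal.ofReal (1 - δ) ≤ μ A :=
  calc ENNReal.ofReal (1 - δ) = μ Set.univ - ENNReal.ofReal δ := by
        rw [ENNReal.ofReal_sub 1 hδ, ENNReal.ofReal_one, measure_univ]
    _ ≤ μ Set.univ - μ B := tsub_le_tsub_left hB _
    _ ≤ μ (Set.univ \ B) := le_measure_sdiff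
    _ ≤ μ A := measure_mono (Set.compl_eq_univ_sdiff B ▸ hBA)

def MeasureTheory.Filtration.shift (𝓕 : Filtration ℕ m0) (k : ℕ) : Filtration ℕ m0 where
  seq n := 𝓕 (k + n)
  mono' _ _ h := 𝓕.mono (Nat.add_le_add_left h k)
  le' n := 𝓕.le (k + n)

@[simp]
theorem MeasureTheory.Filtration.shift_apply (𝓕 : Filtration ℕ m0) (k n : ℕ) :
    𝓕.shift k n = 𝓕 (k + n) :=
  rfl

end

/-- **Lemma (simultaneous Bernstein-type martingale bound).** Let `k ≥ 0` and `(ΔN_t)_{t>k}` be a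
martingale difference sequence adapted to a filtration `(F_t)` with square-integrable increments.
Then for any `δ, λ > 0`, with probability at least `1 − δ`, simultaneously for all `n ≥ 1`,
`∑_{t=k+1}^{k+n} (ΔN_t − (λ/2)(ΔN_t² + E[ΔN_t²|F_{t−1}])) ≤ ln(1/δ)/λ`. -/
theorem martingale_simultaneous_bernstein
    {Ω : Type*} {m0 : MeasurableSpace Ω} (μ : Measure Ω) [IsProbabilityMeasure μ]
    (𝓕 : Filtration ℕ m0) (k : ℕ) (ΔN : ℕ → Ω → ℝ)
    (hadapt : ∀ t > k, StronglyMeasurable[𝓕 t] (ΔN t))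
    (hint : ∀ t > k, Integrable (ΔN t) μ)
    (hint2 : ∀ t > k, Integrable (fun ω => (ΔN t ω) ^ 2) μ)
    (hmart : ∀ t > k, μ[ΔN t|𝓕 (t - 1)] =ᵐ[μ] 0)
    (δ lam : ℝ) (hδ : 0 < δ) (hlam : 0 < lam) :
    ENNReal.ofReal (1 - δ) ≤
      μ {ω | ∀ n ≥ 1,
        ∑ t ∈ Finset.Icc (k + 1) (k + n),
            (ΔN t ω - lam / 2 * ((ΔN t ω) ^ 2 + (μ[fun ω' => (ΔN t ω') ^ 2|𝓕 (t - 1)]) ω))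
          ≤ Real.log δ⁻¹ / lam} := by
  let X : ℕ → Ω → ℝ := fun i => ΔN (k + i + 1)
  let S := bernsteinSum μ (𝓕.shift k) lam X
  have hsuper : Supermartingale (fun n ω => exp (lam * S n ω)) (𝓕.shift k) μ :=
    supermartingale_exp_mul_bernsteinSum (𝒢 := 𝓕.shift k) (X := X) (fun i => hadapt _ (by omega))
      (fun i => hint _ (by omega)) (fun i => hint2 _ (by omega))
      (fun i => by simpa using hmart (k + i + 1) (by omega)) lam
  have hS : ∀ n ω, ∑ t ∈ Icc (k + 1) (k + n),
      (ΔN t ω - lam / 2 * ((ΔN t ω) ^ 2 + (μ[fun ω' => (ΔN t ω') ^ 2|𝓕 (t - 1)]) ω)) = S n ω := by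
    intro n ω
    rw [← Ico_add_one_right_eq_Icc, sum_Ico_eq_sum_range]
    simp [S, X, bernsteinSum, bernsteinIncrement, add_right_comm k 1]
  have hZ0 : ∫ ω, exp (lam * S 0 ω) ∂μ = 1 := by simp [S, bernsteinSum]
  have hbad := hsuper.measure_exists_ge_le (fun _ _ => (exp_pos _).le) (inv_pos.2 hδ)
  rw [hZ0, one_div, inv_inv] at hbad
  simp only [hS]
  refine ofReal_one_sub_le_measure_of_compl_subset hδ.le hbad fun ω hω n _ => ?_
  simp only [Set.mem_compl_iff, Set.mem_ofPred_eq, not_exists, not_le] at hω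
  rw [le_div_iff₀' hlam]
  exact ((lt_log_iff_exp_lt (inv_pos.2 hδ)).2 (hω n)).le
end

section
/- For any deterministic sequences (X_t)_{t≥1} in ℝ^d and (y_t)_{t≥1} in ℝ, any θ̂_1 ∈ ℝ^d and any positive definite d×d matrix P_1, the static EKF iterates satisfy, for every θ* ∈ ℝ^d and every n ∈ ℕ: Σ_{t=1}^{n} [ (ℓ'(y_t, θ̂_tᵀX_t)·X_t)ᵀ(θ̂_t − θ*) − (1/2)·(θ̂_t − θ*)ᵀ·(ℓ''(y_t, θ̂_tᵀX_t)·X_tX_tᵀ)·(θ̂_t − θ*) ] ≤ (1/2)·Σ_{t=1}^{n} X_tᵀP_{t+1}X_t·ℓ'(y_t, θ̂_tᵀX_t)² + ‖θ̂_1 − θ*‖²/λ_min(P_1). -/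
/-!
The argument runs on the potential `V_t = (θ̂_t − θ*)ᵀ P_t⁻¹ (θ̂_t − θ*)`. By Sherman–Morrison the
covariance recursion is the precision update `P_{t+1}⁻¹ = P_t⁻¹ + ℓ''_t X_t X_tᵀ`, with `ℓ''_t ≥ 0`
by convexity of `b`, so every `P_t` is positive definite. Expanding `V_{t+1}` along
`θ̂_{t+1} − θ* = (θ̂_t − θ*) − ℓ'_t P_{t+1} X_t` shows that the `t`-th summand equals
`½ (V_t − V_{t+1}) + ½ X_tᵀ P_{t+1} X_t ℓ'_t²`. The sum telescopes, `V_{n+1} ≥ 0`, and the Rayleigh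
bound `λ_min(P_1) ‖v‖² ≤ vᵀ P_1 v` gives `V_1 ≤ ‖θ̂_1 − θ*‖² / λ_min(P_1)`.
-/

open MeasureTheory ProbabilityTheory Matrix Real
open scoped ENNReal

/-- The largest eigenvalue of a (symmetric) matrix. -/
noncomputable def lambdaMax {d : ℕ} (M : Matrix (Fin d) (Fin d) ℝ) : ℝ :=
  sSup {r : ℝ | ∃ v : Fin d → ℝ, v ≠ 0 ∧ M.mulVec v = r • v}

/-- The smallest eigenvalue of a (symmetric) matrix. -/
noncomputable def lambdaMin {d : ℕ} (M : Matrix (Fin d) (Fin d) ℝ) : ℝ :=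
  sInf {r : ℝ | ∃ v : Fin d → ℝ, v ≠ 0 ∧ M.mulVec v = r • v}

/-- The Euclidean norm of a vector of `Fin d → ℝ`. -/
noncomputable def euclNorm {d : ℕ} (v : Fin d → ℝ) : ℝ :=
  Real.sqrt (∑ i, v i ^ 2)

lemma deriv_deriv_nonneg_of_convexOn {b : ℝ → ℝ} (hb : Differentiable ℝ b)
    (hconv : ConvexOn ℝ Set.univ b) (z : ℝ) : 0 ≤ deriv (deriv b) z :=
  (monotoneOn_univ.1 (hconv.monotoneOn_deriv fun x _ => hb x)).deriv_nonneg

lemma euclNorm_sq {d : ℕ} (v : Fin d → ℝ) : euclNorm v ^ 2 = v ⬝ᵥ v := by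
  rw [euclNorm, Real.sq_sqrt (Finset.sum_nonneg fun i _ => sq_nonneg (v i))]
  simp only [dotProduct, sq]

namespace Matrix

variable {n : Type*} [Fintype n]

theorem IsHermitian.dotProduct_mulVec_comm {A : Matrix n n ℝ} (hA : A.IsHermitian)
    (v w : n → ℝ) : v ⬝ᵥ A *ᵥ w = w ⬝ᵥ A *ᵥ v := by
  rw [dotProduct_mulVec, ← mulVec_transpose, dotProduct_comm,
    ← conjTranspose_eq_transpose_of_trivial, hA.eq]

variable [DecidableEq n]

/-- The Sherman–Morrison formula. -/
theorem inv_add_smul_vecMulVec {K : Type*} [Field K] {A : Matrix n n K} (hA : IsUnit A.det)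
    (c : K) (u v : n → K) (hden : 1 + c * (v ⬝ᵥ A *ᵥ u) ≠ 0) :
    (A⁻¹ + c • vecMulVec u v)⁻¹
      = A - (c / (1 + c * (v ⬝ᵥ A *ᵥ u))) • (A * vecMulVec u v * A) := by
  refine inv_eq_left_inv ?_
  have hMAM : vecMulVec u v * (A * vecMulVec u v) = (v ⬝ᵥ A *ᵥ u) • vecMulVec u v := by
    rw [mul_vecMulVec, vecMulVec_mul_vecMulVec]
    ext i j
    simp only [vecMulVec_apply, Pi.smul_apply, smul_apply, smul_eq_mul]
    ring
  have hcoef : c / (1 + c * (v ⬝ᵥ A *ᵥ u)) + c / (1 + c * (v ⬝ᵥ A *ᵥ u)) * (c * (v ⬝ᵥ A *ᵥ u))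
      = c := by
    field_simp
  simp only [sub_mul, mul_add, smul_mul, Matrix.mul_smul, Matrix.mul_assoc, mul_nonsing_inv _ hA,
    Matrix.mul_one, hMAM]
  linear_combination (norm := module) -(hcoef • (A * vecMulVec u v))

theorem PosDef.inv_add_smul_vecMulVec_self {A : Matrix n n ℝ} (hA : A.PosDef) {c : ℝ}
    (hc : 0 ≤ c) (x : n → ℝ) : (A⁻¹ + c • vecMulVec x x).PosDef := by
  simpa using hA.inv.add_posSemidef ((posSemidef_vecMulVec_self_star x).smul hc)

theorem PosDef.covariance_update {A B : Matrix n n ℝ} (hA : A.PosDef) {c : ℝ} (hc : 0 ≤ c)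
    {x : n → ℝ} (hB : B = A - (c / (1 + c * (x ⬝ᵥ A *ᵥ x))) • (A * vecMulVec x x * A)) :
    B.PosDef ∧ B⁻¹ = A⁻¹ + c • vecMulVec x x := by
  have hquad : 0 ≤ x ⬝ᵥ A *ᵥ x := by simpa using hA.posSemidef.dotProduct_mulVec_nonneg x
  have hprec := hA.inv_add_smul_vecMulVec_self hc x
  rw [hB, ← inv_add_smul_vecMulVec ((isUnit_iff_isUnit_det A).1 hA.isUnit) c x x (by positivity),
    nonsing_inv_nonsing_inv _ ((isUnit_iff_isUnit_det _).1 hprec.isUnit)]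
  exact ⟨hprec.inv, rfl⟩

end Matrix

section lambdaMin

open scoped MatrixOrder

variable {d : ℕ}

theorem lambdaMin_eq_sInf_spectrum (A : Matrix (Fin d) (Fin d) ℝ) :
    lambdaMin A = sInf (spectrum ℝ A) := by
  rw [lambdaMin, ← spectrum_toLin']
  congr 1
  ext r
  rw [Set.mem_ofPred_eq, ← Module.End.hasEigenvalue_iff_mem_spectrum]
  constructor
  · rintro ⟨v, hv, hAv⟩
    exact Module.End.hasEigenvalue_of_hasEigenvector
      ⟨Module.End.mem_eigenspace_iff.2 (by simpa using hAv), hv⟩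
  · intro hr
    obtain ⟨v, hv, hv0⟩ := hr.exists_hasEigenvector
    exact ⟨v, hv0, by simpa using Module.End.mem_eigenspace_iff.1 hv⟩

theorem Matrix.IsHermitian.lambdaMin_mul_dotProduct_self_le {A : Matrix (Fin d) (Fin d) ℝ}
    (hA : A.IsHermitian) (v : Fin d → ℝ) : lambdaMin A * (v ⬝ᵥ v) ≤ v ⬝ᵥ A *ᵥ v := by
  have hfin : (spectrum ℝ A).Finite := hA.spectrum_real_eq_range_eigenvalues ▸ Set.finite_range _
  have hle : algebraMap ℝ _ (lambdaMin A) ≤ A :=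
    (algebraMap_le_iff_le_spectrum hA.isSelfAdjoint).2 fun r hr =>
      lambdaMin_eq_sInf_spectrum A ▸ csInf_le hfin.bddBelow hr
  have := (le_iff.1 hle).dotProduct_mulVec_nonneg v
  simp only [Algebra.algebraMap_eq_smul_one, sub_mulVec, smul_mulVec, one_mulVec,
    dotProduct_sub, dotProduct_smul, star_trivial, smul_eq_mul] at this
  linarith

theorem Matrix.PosDef.lambdaMin_pos [NeZero d] {A : Matrix (Fin d) (Fin d) ℝ} (hA : A.PosDef) :
    0 < lambdaMin A := by
  rw [lambdaMin_eq_sInf_spectrum, hA.isHermitian.spectrum_real_eq_range_eigenvalues]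
  obtain ⟨i, hi⟩ := (Set.range_nonempty _).csInf_mem (Set.finite_range hA.isHermitian.eigenvalues)
  exact hi ▸ hA.eigenvalues_pos i

theorem Matrix.PosDef.dotProduct_inv_mulVec_le {A : Matrix (Fin d) (Fin d) ℝ} (hA : A.PosDef)
    (e : Fin d → ℝ) : e ⬝ᵥ A⁻¹ *ᵥ e ≤ euclNorm e ^ 2 / lambdaMin A := by
  rcases Nat.eq_zero_or_pos d with rfl | hd
  · simp [dotProduct, euclNorm]
  have : NeZero d := ⟨hd.ne'⟩
  have hμ := hA.lambdaMin_pos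
  set w := A⁻¹ *ᵥ e
  have hAw : A *ᵥ w = e := by
    rw [mulVec_mulVec, mul_nonsing_inv _ ((isUnit_iff_isUnit_det A).1 hA.isUnit), one_mulVec]
  have hrayleigh : lambdaMin A * (w ⬝ᵥ w) ≤ e ⬝ᵥ w := by
    simpa [← hAw, dotProduct_comm] using hA.isHermitian.lambdaMin_mul_dotProduct_self_le w
  -- AM–GM: `2 μ e·w ≤ e·e + μ² w·w`
  have hsq := dotProduct_self_star_nonneg (e - lambdaMin A • w)
  simp only [star_trivial, dotProduct_sub, sub_dotProduct, dotProduct_smul, smul_dotProduct,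
    smul_eq_mul, dotProduct_comm w e] at hsq
  rw [euclNorm_sq, le_div_iff₀ hμ]
  nlinarith

end lambdaMin

section EKF

variable {n : Type*} [Fintype n] [DecidableEq n]

theorem ekf_step_identity {A P : Matrix n n ℝ} (hP : P.IsHermitian) (hdet : IsUnit P.det) {c : ℝ}
    {x : n → ℝ} (hinv : P⁻¹ = A + c • vecMulVec x x) (e : n → ℝ) (g : ℝ) :
    (g • x) ⬝ᵥ e - 1 / 2 * (e ⬝ᵥ (c • vecMulVec x x) *ᵥ e)
      = 1 / 2 * ((x ⬝ᵥ P *ᵥ x) * g ^ 2)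
        - ((e - g • P *ᵥ x) ⬝ᵥ P⁻¹ *ᵥ (e - g • P *ᵥ x) / 2 - e ⬝ᵥ A *ᵥ e / 2) := by
  have hPx : P⁻¹ *ᵥ (P *ᵥ x) = x := by rw [mulVec_mulVec, nonsing_inv_mul _ hdet, one_mulVec]
  have hcross : (P *ᵥ x) ⬝ᵥ P⁻¹ *ᵥ e = x ⬝ᵥ e := by
    rw [hP.inv.dotProduct_mulVec_comm, hPx, dotProduct_comm]
  have hrank : e ⬝ᵥ (c • vecMulVec x x) *ᵥ e = c * (x ⬝ᵥ e) ^ 2 := by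
    rw [smul_mulVec, vecMulVec_mulVec, dotProduct_smul, op_smul_eq_smul, dotProduct_smul,
      dotProduct_comm e x, smul_eq_mul, smul_eq_mul]
    ring
  simp only [mulVec_sub, mulVec_smul, dotProduct_sub, sub_dotProduct, smul_dotProduct,
    dotProduct_smul, smul_eq_mul, hPx, hcross]
  rw [hinv, add_mulVec, dotProduct_add, hrank, dotProduct_comm e x, dotProduct_comm (P *ᵥ x) x]
  ring

theorem posDef_and_inv_of_covariance_recursion {P : ℕ → Matrix n n ℝ} {x : ℕ → n → ℝ}
    {c : ℕ → ℝ} (hc : ∀ t, 0 ≤ c t) (hP1 : (P 1).PosDef)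
    (hrec : ∀ t ≥ 1, P (t + 1) =
      P t - (c t / (1 + c t * (x t ⬝ᵥ P t *ᵥ x t))) • (P t * vecMulVec (x t) (x t) * P t)) :
    ∀ t ≥ 1, (P t).PosDef ∧ (P (t + 1))⁻¹ = (P t)⁻¹ + c t • vecMulVec (x t) (x t) := by
  intro t ht
  induction t, ht using Nat.le_induction with
  | base => exact ⟨hP1, (hP1.covariance_update (hc 1) (hrec 1 le_rfl)).2⟩
  | succ t ht ih =>
    have hPt1 := (ih.1.covariance_update (hc t) (hrec t ht)).1
    exact ⟨hPt1, (hPt1.covariance_update (hc (t + 1)) (hrec (t + 1) (by omega))).2⟩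

end EKF

/-- **Lemma (recursive bound for the static EKF).** For any deterministic data sequences, any
initialization `θ̂₁, P₁ ≻ 0`, the static EKF iterates satisfy, for every `θ*` and `n`,
`∑_{t=1}^n [(ℓ'(y_t, θ̂_tᵀX_t)X_t)ᵀ(θ̂_t − θ*) − ½ (θ̂_t − θ*)ᵀ(ℓ''(y_t, θ̂_tᵀX_t)X_tX_tᵀ)(θ̂_t − θ*)]
  ≤ ½ ∑_{t=1}^n X_tᵀP_{t+1}X_t ℓ'(y_t, θ̂_tᵀX_t)² + ‖θ̂₁ − θ*‖²/λ_min(P₁)`,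
where `ℓ'(y,z) = (b'(z) − y)/a` and `ℓ''(y,z) = b''(z)/a`. -/
theorem ekf_recursive_bound {d : ℕ}
    (a : ℝ) (ha : 0 < a) (b : ℝ → ℝ) (hb : ContDiff ℝ 2 b) (hbconv : ConvexOn ℝ Set.univ b)
    (X : ℕ → Fin d → ℝ) (y : ℕ → ℝ)
    (θhat : ℕ → Fin d → ℝ) (P : ℕ → Matrix (Fin d) (Fin d) ℝ)
    (hP1 : (P 1).PosDef)
    (hPrec : ∀ t ≥ 1, P (t + 1) =
      P t - ((deriv (deriv b) (θhat t ⬝ᵥ X t) / a) /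
          (1 + (deriv (deriv b) (θhat t ⬝ᵥ X t) / a) * (X t ⬝ᵥ (P t).mulVec (X t)))) •
        (P t * vecMulVec (X t) (X t) * P t))
    (hθrec : ∀ t ≥ 1, θhat (t + 1) =
      θhat t + ((y t - deriv b (θhat t ⬝ᵥ X t)) / a) • (P (t + 1)).mulVec (X t))
    (θstar : Fin d → ℝ) (n : ℕ) :
    ∑ t ∈ Finset.Icc 1 n,
        ((((deriv b (θhat t ⬝ᵥ X t) - y t) / a) • X t) ⬝ᵥ (θhat t - θstar)
          - 1 / 2 * ((θhat t - θstar) ⬝ᵥ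
              ((deriv (deriv b) (θhat t ⬝ᵥ X t) / a) • vecMulVec (X t) (X t)).mulVec
                (θhat t - θstar)))
      ≤ 1 / 2 * ∑ t ∈ Finset.Icc 1 n,
          (X t ⬝ᵥ (P (t + 1)).mulVec (X t)) * ((deriv b (θhat t ⬝ᵥ X t) - y t) / a) ^ 2
        + euclNorm (θhat 1 - θstar) ^ 2 / lambdaMin (P 1) := by
  have hc : ∀ t, 0 ≤ deriv (deriv b) (θhat t ⬝ᵥ X t) / a := fun t =>
    div_nonneg (deriv_deriv_nonneg_of_convexOn (hb.differentiable two_ne_zero) hbconv _) ha.le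
  have hcov := posDef_and_inv_of_covariance_recursion
    (c := fun t => deriv (deriv b) (θhat t ⬝ᵥ X t) / a) hc hP1 hPrec
  set W : ℕ → ℝ := fun t => (θhat t - θstar) ⬝ᵥ (P t)⁻¹ *ᵥ (θhat t - θstar) / 2
  have hW : ∀ t ≥ 1, 0 ≤ W t := fun t ht =>
    div_nonneg (by simpa only [star_trivial]
      using (hcov t ht).1.inv.posSemidef.dotProduct_mulVec_nonneg _) two_pos.le
  have hW1 : 2 * W 1 ≤ euclNorm (θhat 1 - θstar) ^ 2 / lambdaMin (P 1) := by
    simp only [W]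
    linarith [hP1.dotProduct_inv_mulVec_le (θhat 1 - θstar)]
  calc _ = ∑ t ∈ Finset.Icc 1 n, (1 / 2 * ((X t ⬝ᵥ P (t + 1) *ᵥ X t)
        * ((deriv b (θhat t ⬝ᵥ X t) - y t) / a) ^ 2) - (W (t + 1) - W t)) := by
        refine Finset.sum_congr rfl fun t ht => ?_
        have ht : 1 ≤ t := (Finset.mem_Icc.1 ht).1
        have hPt1 := (hcov (t + 1) (by omega)).1
        have herr : θhat (t + 1) - θstar
            = θhat t - θstar - ((deriv b (θhat t ⬝ᵥ X t) - y t) / a) • P (t + 1) *ᵥ X t := by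
          rw [hθrec t ht]; module
        simp only [W, herr]
        exact ekf_step_identity hPt1.isHermitian ((isUnit_iff_isUnit_det _).1 hPt1.isUnit)
          (hcov t ht).2 _ _
    _ = 1 / 2 * ∑ t ∈ Finset.Icc 1 n, (X t ⬝ᵥ P (t + 1) *ᵥ X t)
          * ((deriv b (θhat t ⬝ᵥ X t) - y t) / a) ^ 2 - (W (n + 1) - W 1) := by
        rw [Finset.sum_sub_distrib, ← Finset.mul_sum, ← Finset.Ico_add_one_right_eq_Icc,
          Finset.sum_Ico_sub W (by omega)]
    _ ≤ _ := by linarith [hW 1 le_rfl, hW (n + 1) (by omega)]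
end

section
/- Let (X, y) be a random pair in ℝ^d × ℝ with ‖X‖ ≤ D_X almost surely and y almost surely bounded, and suppose θ* satisfies the first-order condition E[(y − b'(θ*ᵀX))·X] = 0. Fix θ ∈ ℝ^d and let ρ > 0 be such that almost surely b''(θ₁ᵀX) ≥ ρ·b''(θ₂ᵀX) for all θ₁, θ₂ ∈ ℝ^d with ‖θ₁ − θ*‖ ≤ ‖θ − θ*‖ and ‖θ₂ − θ*‖ ≤ ‖θ − θ*‖. Then E[ℓ'(y, θᵀX)·X]ᵀ·(θ − θ*) ≥ ρ·(θ − θ*)ᵀ·E[ℓ''(y, θᵀX)·X Xᵀ]·(θ − θ*). -/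
/-!
Write `v = θ - θ*`. By the first-order condition the gradient at `θ` paired with `v` equals
`E[(b'(θᵀX) - b'(θ*ᵀX)) vᵀX] / a`. Pointwise, the mean value theorem writes
`b'(θᵀX) - b'(θ*ᵀX)` as `b''(c) vᵀX` with `c = θ₁ᵀX` for some `θ₁` on the segment `[θ*, θ]`,
and `‖θ₁ - θ*‖ ≤ ‖θ - θ*‖`, so the assumption gives `b''(c) ≥ ρ b''(θᵀX)`. Integrating
`ρ b''(θᵀX) (vᵀX)² / a` yields the quadratic form of the Hessian. Boundedness of `X` and `y`
makes every integrand essentially bounded, hence integrable.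
-/

open MeasureTheory ProbabilityTheory Matrix Real
open scoped ENNReal

open Set

lemma abs_apply_le_euclNorm {d : ℕ} (x : Fin d → ℝ) (i : Fin d) : |x i| ≤ euclNorm x := by
  rw [← Real.sqrt_sq_eq_abs]
  exact Real.sqrt_le_sqrt (Finset.single_le_sum (fun j _ => sq_nonneg (x j)) (Finset.mem_univ i))

lemma euclNorm_smul {d : ℕ} (t : ℝ) (v : Fin d → ℝ) : euclNorm (t • v) = |t| * euclNorm v := by
  unfold euclNorm
  rw [← Real.sqrt_sq_eq_abs, ← Real.sqrt_mul (sq_nonneg t), Finset.mul_sum]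
  simp only [Pi.smul_apply, smul_eq_mul, mul_pow]

lemma euclNorm_sub_le_of_mem_segment {d : ℕ} {p q r : Fin d → ℝ} (hr : r ∈ segment ℝ p q) :
    euclNorm (r - p) ≤ euclNorm (q - p) := by
  rw [segment_eq_image'] at hr
  obtain ⟨t, ⟨ht₀, ht₁⟩, rfl⟩ := hr
  rw [add_sub_cancel_left, euclNorm_smul, abs_of_nonneg ht₀]
  exact mul_le_of_le_one_left (Real.sqrt_nonneg _) ht₁

lemma exists_mem_segment_dotProduct_eq {ι : Type*} [Fintype ι] {p q x : ι → ℝ} {c : ℝ}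
    (hc : c ∈ uIcc (p ⬝ᵥ x) (q ⬝ᵥ x)) : ∃ r ∈ segment ℝ p q, r ⬝ᵥ x = c := by
  rw [← segment_eq_uIcc] at hc
  obtain ⟨s, t, hs, ht, hst, rfl⟩ := hc
  exact ⟨s • p + t • q, ⟨s, t, hs, ht, hst, rfl⟩, by
    simp only [add_dotProduct, smul_dotProduct, smul_eq_mul]⟩

lemma mul_sq_le_sub_mul_sub_of_le_deriv {f : ℝ → ℝ} (hf : Differentiable ℝ f) {K z₀ z₁ : ℝ}
    (hK : ∀ c ∈ uIcc z₀ z₁, K ≤ deriv f c) :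
    K * (z₁ - z₀) ^ 2 ≤ (f z₁ - f z₀) * (z₁ - z₀) := by
  wlog h : z₀ ≤ z₁ generalizing z₀ z₁
  · have := this (uIcc_comm z₀ z₁ ▸ hK) (le_of_not_ge h)
    nlinarith
  have hmvt := convex_uIcc z₀ z₁ |>.mul_sub_le_image_sub_of_le_deriv hf.continuous.continuousOn
    hf.differentiableOn (fun c hc => hK c (interior_subset hc))
    z₀ left_mem_uIcc z₁ right_mem_uIcc h
  nlinarith [sub_nonneg.2 h]

lemma mul_sq_dotProduct_le_of_le_deriv_on_segment {ι : Type*} [Fintype ι] {f : ℝ → ℝ}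
    (hf : Differentiable ℝ f) {K : ℝ} {p q x : ι → ℝ}
    (hK : ∀ r ∈ segment ℝ p q, K ≤ deriv f (r ⬝ᵥ x)) :
    K * ((q - p) ⬝ᵥ x) ^ 2 ≤ (f (q ⬝ᵥ x) - f (p ⬝ᵥ x)) * ((q - p) ⬝ᵥ x) := by
  rw [sub_dotProduct]
  refine mul_sq_le_sub_mul_sub_of_le_deriv hf fun c hc => ?_
  obtain ⟨r, hr, rfl⟩ := exists_mem_segment_dotProduct_eq hc
  exact hK r hr

section

variable {Ω ι : Type*} [MeasurableSpace Ω] {μ : Measure Ω}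

lemma MeasureTheory.MemLp.comp_continuous_top {f : Ω → ℝ} (hf : MemLp f ∞ μ) {g : ℝ → ℝ}
    (hg : Continuous g) : MemLp (fun ω => g (f ω)) ∞ μ := by
  obtain ⟨C, hC⟩ := (eLpNormEssSup_lt_top_iff_isBoundedUnder (f := f) (μ := μ)).mp
    (by rw [← eLpNorm_exponent_top]; exact hf.eLpNorm_lt_top)
  obtain ⟨M, hM⟩ := (isCompact_closedBall (0 : ℝ) C).exists_bound_of_continuousOn
    hg.continuousOn
  refine memLp_top_of_bound (hg.comp_aestronglyMeasurable hf.1) M ?_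
  filter_upwards [hC] with ω hω
  exact hM _ (mem_closedBall_zero_iff.2 hω)

lemma MeasureTheory.MemLp.div_const {p : ℝ≥0∞} {f : Ω → ℝ} (hf : MemLp f p μ) (c : ℝ) :
    MemLp (fun ω => f ω / c) p μ := by
  simpa only [div_eq_mul_inv] using hf.mul_const c⁻¹

lemma memLp_dotProduct [Fintype ι] {p : ℝ≥0∞} {X : Ω → ι → ℝ}
    (hX : ∀ i, MemLp (fun ω => X ω i) p μ) (v : ι → ℝ) :
    MemLp (fun ω => v ⬝ᵥ X ω) p μ :=
  memLp_finsetSum _ fun i _ => (hX i).const_mul (v i)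

lemma integral_mul_dotProduct [Fintype ι] (w : Ω → ℝ) (X : Ω → ι → ℝ) (v : ι → ℝ)
    (h : ∀ i, Integrable (fun ω => w ω * X ω i) μ) :
    ∫ ω, w ω * (v ⬝ᵥ X ω) ∂μ = (fun i => ∫ ω, w ω * X ω i ∂μ) ⬝ᵥ v := by
  have hpt : ∀ ω, w ω * (v ⬝ᵥ X ω) = ∑ i, w ω * X ω i * v i := fun ω => by
    simp only [dotProduct, Finset.mul_sum]
    exact Finset.sum_congr rfl fun i _ => by ring
  simp_rw [hpt]
  rw [integral_finsetSum _ fun i _ => (h i).mul_const (v i)]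
  simp only [integral_mul_const, dotProduct]

lemma integral_mul_sq_dotProduct [Fintype ι] (w : Ω → ℝ) (X : Ω → ι → ℝ) (v : ι → ℝ)
    (h : ∀ i j, Integrable (fun ω => w ω * (X ω i * X ω j)) μ) :
    ∫ ω, w ω * (v ⬝ᵥ X ω) ^ 2 ∂μ =
      v ⬝ᵥ (of fun i j => ∫ ω, w ω * (X ω i * X ω j) ∂μ) *ᵥ v := by
  have hpt : ∀ ω, w ω * (v ⬝ᵥ X ω) ^ 2 = ∑ i, ∑ j, v i * (w ω * (X ω i * X ω j) * v j) :=
    fun ω => by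
      rw [sq, dotProduct, Finset.sum_mul_sum, Finset.mul_sum]
      refine Finset.sum_congr rfl fun i _ => ?_
      rw [Finset.mul_sum]
      exact Finset.sum_congr rfl fun j _ => by ring
  simp_rw [hpt]
  have hint : ∀ i j, Integrable (fun ω => v i * (w ω * (X ω i * X ω j) * v j)) μ :=
    fun i j => ((h i j).mul_const (v j)).const_mul (v i)
  rw [integral_finsetSum _ fun i _ => integrable_finsetSum _ fun j _ => hint i j]
  refine Finset.sum_congr rfl fun i _ => ?_
  rw [integral_finsetSum _ fun j _ => hint i j, mulVec, dotProduct, Finset.mul_sum]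
  simp only [integral_const_mul, integral_mul_const, of_apply]

lemma mul_quadForm_integral_le_dotProduct_integral [IsFiniteMeasure μ] [Fintype ι]
    {X : Ω → ι → ℝ} {w₁ w₂ r : Ω → ℝ} {c ρ : ℝ} {v : ι → ℝ}
    (hX : ∀ i, MemLp (fun ω => X ω i) ∞ μ) (hw₁ : MemLp w₁ ∞ μ) (hw₂ : MemLp w₂ ∞ μ)
    (hr : MemLp r ∞ μ) (hr_orth : ∀ i, ∫ ω, r ω * X ω i ∂μ = 0)
    (hle : ∀ᵐ ω ∂μ, ρ * (w₂ ω * (v ⬝ᵥ X ω) ^ 2) ≤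
      w₁ ω * (v ⬝ᵥ X ω) + c * (r ω * (v ⬝ᵥ X ω))) :
    ρ * (v ⬝ᵥ (of fun i j => ∫ ω, w₂ ω * (X ω i * X ω j) ∂μ) *ᵥ v) ≤
      (fun i => ∫ ω, w₁ ω * X ω i ∂μ) ⬝ᵥ v := by
  have hint : ∀ {f : Ω → ℝ}, MemLp f ∞ μ → Integrable f μ := fun hf => hf.integrable le_top
  have hmul : ∀ {f g : Ω → ℝ}, MemLp f ∞ μ → MemLp g ∞ μ → MemLp (fun ω => f ω * g ω) ∞ μ :=
    fun hf hg => hg.mul' hf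
  have hdot := memLp_dotProduct hX v
  calc ρ * (v ⬝ᵥ (of fun i j => ∫ ω, w₂ ω * (X ω i * X ω j) ∂μ) *ᵥ v)
      = ∫ ω, ρ * (w₂ ω * (v ⬝ᵥ X ω) ^ 2) ∂μ := by
        rw [integral_const_mul, integral_mul_sq_dotProduct _ _ _
          fun i j => hint (hmul hw₂ (hmul (hX i) (hX j)))]
    _ ≤ ∫ ω, (w₁ ω * (v ⬝ᵥ X ω) + c * (r ω * (v ⬝ᵥ X ω))) ∂μ := by
        refine integral_mono_ae ?_ (hint ((hmul hw₁ hdot).add ((hmul hr hdot).const_mul c))) hle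
        simpa only [sq] using hint ((hmul hw₂ (hmul hdot hdot)).const_mul ρ)
    _ = (fun i => ∫ ω, w₁ ω * X ω i ∂μ) ⬝ᵥ v := by
        rw [integral_add (hint (hmul hw₁ hdot)) (hint ((hmul hr hdot).const_mul c)),
          integral_const_mul, integral_mul_dotProduct _ _ _ fun i => hint (hmul hw₁ (hX i)),
          integral_mul_dotProduct _ _ _ fun i => hint (hmul hr (hX i))]
        simp [hr_orth]

end

theorem comparison_first_second_order_general
    {Ω : Type*} [MeasurableSpace Ω] (μ : Measure Ω) [IsProbabilityMeasure μ] {d : ℕ}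
    (a : ℝ) (ha : 0 < a) (b : ℝ → ℝ) (hb : ContDiff ℝ 2 b)
    (X : Ω → Fin d → ℝ) (y : Ω → ℝ) (hXmeas : Measurable X) (hymeas : Measurable y)
    (DX : ℝ) (hXbdd : ∀ᵐ ω ∂μ, euclNorm (X ω) ≤ DX)
    (B : ℝ) (hybdd : ∀ᵐ ω ∂μ, |y ω| ≤ B)
    (θstar : Fin d → ℝ)
    (hfoc : ∀ i, ∫ ω, (y ω - deriv b (θstar ⬝ᵥ X ω)) * X ω i ∂μ = 0)
    (θ : Fin d → ℝ) (ρ : ℝ)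
    (hass : ∀ᵐ ω ∂μ, ∀ θ₁ θ₂ : Fin d → ℝ,
      euclNorm (θ₁ - θstar) ≤ euclNorm (θ - θstar) →
      euclNorm (θ₂ - θstar) ≤ euclNorm (θ - θstar) →
      ρ * deriv (deriv b) (θ₂ ⬝ᵥ X ω) ≤ deriv (deriv b) (θ₁ ⬝ᵥ X ω)) :
    ρ * ((θ - θstar) ⬝ᵥ
        (Matrix.of fun i j =>
          ∫ ω, (deriv (deriv b) (θ ⬝ᵥ X ω) / a) * (X ω i * X ω j) ∂μ).mulVec (θ - θstar))
      ≤ (fun i => ∫ ω, ((deriv b (θ ⬝ᵥ X ω) - y ω) / a) * X ω i ∂μ) ⬝ᵥ (θ - θstar) := by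
  set v := θ - θstar
  have hX : ∀ i, MemLp (fun ω => X ω i) ∞ μ := fun i =>
    memLp_top_of_bound (measurable_pi_apply i |>.comp hXmeas).aestronglyMeasurable DX
      (hXbdd.mono fun ω h => (abs_apply_le_euclNorm (X ω) i).trans h)
  have hy : MemLp y ∞ μ := memLp_top_of_bound hymeas.aestronglyMeasurable B hybdd
  have hdot := memLp_dotProduct hX
  have hb' := hb.continuous_deriv one_le_two
  have hℓ' : MemLp (fun ω => (deriv b (θ ⬝ᵥ X ω) - y ω) / a) ∞ μ :=
    (((hdot θ).comp_continuous_top hb').sub hy).div_const a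
  have hℓ'' : MemLp (fun ω => deriv (deriv b) (θ ⬝ᵥ X ω) / a) ∞ μ :=
    ((hdot θ).comp_continuous_top ((hb.deriv' (n := 1)).continuous_deriv le_rfl)).div_const a
  have hres : MemLp (fun ω => y ω - deriv b (θstar ⬝ᵥ X ω)) ∞ μ :=
    hy.sub ((hdot θstar).comp_continuous_top hb')
  have hpointwise : ∀ᵐ ω ∂μ, ρ * (deriv (deriv b) (θ ⬝ᵥ X ω) / a * (v ⬝ᵥ X ω) ^ 2) ≤
      (deriv b (θ ⬝ᵥ X ω) - y ω) / a * (v ⬝ᵥ X ω) +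
        a⁻¹ * ((y ω - deriv b (θstar ⬝ᵥ X ω)) * (v ⬝ᵥ X ω)) := by
    filter_upwards [hass] with ω hω
    have key := mul_sq_dotProduct_le_of_le_deriv_on_segment (p := θstar) (q := θ)
      hb.differentiable_deriv_two fun r hr => hω r θ (euclNorm_sub_le_of_mem_segment hr) le_rfl
    calc _ = ρ * deriv (deriv b) (θ ⬝ᵥ X ω) * (v ⬝ᵥ X ω) ^ 2 / a := by ring
      _ ≤ (deriv b (θ ⬝ᵥ X ω) - deriv b (θstar ⬝ᵥ X ω)) * (v ⬝ᵥ X ω) / a := by gcongr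
      _ = _ := by ring
  exact mul_quadForm_integral_le_dotProduct_integral hX hℓ' hℓ'' hres hfoc hpointwise

/-- **Proposition (comparison of the first- and second-order terms).** Let `(X, y)` be a random
pair with `‖X‖ ≤ D_X` a.s. and `y` a.s. bounded, and let `θ*` satisfy the first-order condition
`E[(y − b'(θ*ᵀX))X] = 0`. Fix `θ` and `ρ > 0` such that a.s.
`b''(θ₁ᵀX) ≥ ρ b''(θ₂ᵀX)` for all `θ₁, θ₂` with `‖θᵢ − θ*‖ ≤ ‖θ − θ*‖`. Then
`E[ℓ'(y, θᵀX)X]ᵀ(θ − θ*) ≥ ρ (θ − θ*)ᵀ E[ℓ''(y, θᵀX)XXᵀ] (θ − θ*)`,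
where `ℓ'(y,z) = (b'(z) − y)/a` and `ℓ''(y,z) = b''(z)/a`. -/
theorem comparison_first_second_order
    {Ω : Type*} [MeasurableSpace Ω] (μ : Measure Ω) [IsProbabilityMeasure μ] {d : ℕ}
    (a : ℝ) (ha : 0 < a) (b : ℝ → ℝ) (hb : ContDiff ℝ 2 b) (hbconv : ConvexOn ℝ Set.univ b)
    (X : Ω → Fin d → ℝ) (y : Ω → ℝ) (hXmeas : Measurable X) (hymeas : Measurable y)
    (DX : ℝ) (hDX : 0 < DX) (hXbdd : ∀ᵐ ω ∂μ, euclNorm (X ω) ≤ DX)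
    (B : ℝ) (hybdd : ∀ᵐ ω ∂μ, |y ω| ≤ B)
    (θstar : Fin d → ℝ)
    (hfoc : ∀ i, ∫ ω, (y ω - deriv b (θstar ⬝ᵥ X ω)) * X ω i ∂μ = 0)
    (θ : Fin d → ℝ) (ρ : ℝ) (hρ : 0 < ρ)
    (hass : ∀ᵐ ω ∂μ, ∀ θ₁ θ₂ : Fin d → ℝ,
      euclNorm (θ₁ - θstar) ≤ euclNorm (θ - θstar) →
      euclNorm (θ₂ - θstar) ≤ euclNorm (θ - θstar) →
      ρ * deriv (deriv b) (θ₂ ⬝ᵥ X ω) ≤ deriv (deriv b) (θ₁ ⬝ᵥ X ω)) :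
    ρ * ((θ - θstar) ⬝ᵥ
        (Matrix.of fun i j =>
          ∫ ω, (deriv (deriv b) (θ ⬝ᵥ X ω) / a) * (X ω i * X ω j) ∂μ).mulVec (θ - θstar))
      ≤ (fun i => ∫ ω, ((deriv b (θ ⬝ᵥ X ω) - y ω) / a) * X ω i ∂μ) ⬝ᵥ (θ - θstar) :=
  comparison_first_second_order_general μ a ha b hb X y hXmeas hymeas DX hXbdd B hybdd θstar hfoc θ
    ρ hass
end

section
/- Let (F_n)_{n≥0} be a filtration, (A_n)_{n≥0} a sequence of events adapted to (F_n) (A_n ∈ F_n), and (V_n)_{n≥0} a sequence of random variables adapted to (F_n) with V_0 = 1, V_n ≥ 0 almost surely for all n, and E[V_n·1_{A_{n−1}} | F_{n−1}] ≤ V_{n−1} almost surely for all n ≥ 1. Then for any δ > 0: P( (∪_{n≥1} {V_n > 1/δ}) ∪ (∪_{n≥0} A_nᶜ) ) ≤ δ + P( ∪_{n≥0} A_nᶜ ). -/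
/-!
Killing `V` from the first time one of the events `A k` fails turns the almost-supermartingale
into a genuine nonnegative supermartingale `W` with `W 0 = 1`, which coincides with `V` on
`⋂ n, A n`. Ville's inequality, i.e. optional stopping at the first time `W` reaches `δ⁻¹`, gives
`P(∃ n, δ⁻¹ ≤ W n) ≤ δ`, and outside `⋃ n, (A n)ᶜ` every event `δ⁻¹ < V n` lies inside it.
-/

open MeasureTheory ProbabilityTheory Set

namespace MeasureTheory

variable {Ω : Type*} {m0 : MeasurableSpace Ω} {μ : Measure Ω} {𝓕 : Filtration ℕ m0}
  {f : ℕ → Ω → ℝ}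

theorem Supermartingale.integrable_stoppedValue (hf : Supermartingale f 𝓕 μ) {τ : Ω → ℕ∞}
    (hτ : IsStoppingTime 𝓕 τ) {N : ℕ} (hbdd : ∀ ω, τ ω ≤ N) :
    Integrable (stoppedValue f τ) μ := by
  have hneg : stoppedValue (-f) τ = -stoppedValue f τ := stoppedValue_neg
  simpa [hneg] using (hf.neg.integrable_stoppedValue hτ hbdd).neg

theorem Supermartingale.expected_stoppedValue_anti [SigmaFiniteFiltration μ 𝓕]
    (hf : Supermartingale f 𝓕 μ) {τ σ : Ω → ℕ∞} (hτ : IsStoppingTime 𝓕 τ)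
    (hσ : IsStoppingTime 𝓕 σ) (hle : τ ≤ σ) {N : ℕ} (hbdd : ∀ ω, σ ω ≤ N) :
    μ[stoppedValue f σ] ≤ μ[stoppedValue f τ] := by
  have hneg (ρ : Ω → ℕ∞) : stoppedValue (-f) ρ = -stoppedValue f ρ := stoppedValue_neg
  simpa [hneg, integral_neg] using hf.neg.expected_stoppedValue_mono hτ hσ hle hbdd

theorem Supermartingale.mul_measureReal_accumulate_le [IsFiniteMeasure μ]
    (hf : Supermartingale f 𝓕 μ) (hnonneg : ∀ n, 0 ≤ᵐ[μ] f n) (ε : ℝ) (n : ℕ) :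
    ε * μ.real (accumulate (fun k ↦ {ω | ε ≤ f k ω}) n) ≤ μ[f 0] := by
  set S := accumulate (fun k ↦ {ω | ε ≤ f k ω}) n
  -- the first time `f` reaches `ε`, or `n` if it does not by then
  set τ : Ω → ℕ∞ := fun ω ↦ (hittingBtwn f (Ici ε) 0 n ω : ℕ)
  have hτ : IsStoppingTime 𝓕 τ :=
    hf.stronglyAdapted.adapted.isStoppingTime_hittingBtwn measurableSet_Ici
  have hτ_le (ω : Ω) : τ ω ≤ n := WithTop.coe_le_coe.mpr (hittingBtwn_le ω)
  have hS : MeasurableSet S := MeasurableSet.biUnion (to_countable _) fun k _ ↦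
    measurableSet_le measurable_const ((hf.stronglyAdapted k).measurable.le (𝓕.le k))
  have hint := hf.integrable_stoppedValue hτ hτ_le
  have hε_le (ω : Ω) (hω : ω ∈ S) : ε ≤ stoppedValue f τ ω := by
    obtain ⟨k, hk, hεk⟩ := mem_accumulate.mp hω
    exact stoppedValue_hittingBtwn_mem ⟨k, ⟨k.zero_le, hk⟩, hεk⟩
  calc ε * μ.real S ≤ ∫ ω in S, stoppedValue f τ ω ∂μ :=
        setIntegral_ge_of_const_le_real hS (measure_ne_top _ _) hε_le hint.integrableOn
    _ ≤ μ[stoppedValue f τ] :=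
        setIntegral_le_integral hint (ae_all_iff.mpr hnonneg |>.mono fun ω h ↦ h _)
    _ ≤ μ[stoppedValue f fun _ ↦ (0 : ℕ)] :=
        hf.expected_stoppedValue_anti (isStoppingTime_const 𝓕 0) hτ
          (fun ω ↦ WithTop.coe_le_coe.mpr (Nat.zero_le _)) hτ_le
    _ = μ[f 0] := rfl

theorem Supermartingale.measure_exists_le_le [IsFiniteMeasure μ]
    (hf : Supermartingale f 𝓕 μ) (hnonneg : ∀ n, 0 ≤ᵐ[μ] f n) {ε : ℝ} (hε : 0 < ε) :
    μ {ω | ∃ n, ε ≤ f n ω} ≤ ENNReal.ofReal (μ[f 0] / ε) := by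
  rw [ofPred_exists, measure_iUnion_eq_iSup_accumulate]
  refine iSup_le fun n ↦ ?_
  rw [← ofReal_measureReal]
  refine ENNReal.ofReal_le_ofReal ?_
  rw [le_div_iff₀ hε, mul_comm]
  exact hf.mul_measureReal_accumulate_le hnonneg ε n

end MeasureTheory

section KilledProcess

variable {Ω : Type*} {m0 : MeasurableSpace Ω} {μ : Measure Ω} {𝓕 : Filtration ℕ m0}
  {A : ℕ → Set Ω} {V : ℕ → Ω → ℝ}

noncomputable def killedProcess (A : ℕ → Set Ω) (V : ℕ → Ω → ℝ) (n : ℕ) : Ω → ℝ :=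
  (⋂ k < n, A k).indicator (V n)

@[simp]
theorem killedProcess_zero : killedProcess A V 0 = V 0 := by
  simp [killedProcess]

theorem killedProcess_succ (n : ℕ) :
    killedProcess A V (n + 1) = (⋂ k < n, A k).indicator ((A n).indicator (V (n + 1))) := by
  rw [killedProcess, biInter_lt_succ, indicator_indicator]

theorem killedProcess_apply_of_forall_mem {ω : Ω} (hω : ∀ k, ω ∈ A k) (n : ℕ) :
    killedProcess A V n ω = V n ω :=
  indicator_of_mem (mem_iInter₂.mpr fun k _ ↦ hω k) _

theorem killedProcess_nonneg (hV : ∀ n, 0 ≤ᵐ[μ] V n) (n : ℕ) :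
    0 ≤ᵐ[μ] killedProcess A V n :=
  (hV n).mono fun _ hω ↦ indicator_nonneg (fun _ _ ↦ hω) _

theorem supermartingale_killedProcess [IsFiniteMeasure μ] (hA : ∀ n, MeasurableSet[𝓕 n] (A n))
    (hV : StronglyAdapted 𝓕 V) (hVint : ∀ n, Integrable (V n) μ)
    (hsuper : ∀ n, μ[(A n).indicator (V (n + 1))|𝓕 n] ≤ᵐ[μ] V n) :
    Supermartingale (killedProcess A V) 𝓕 μ := by
  have hC (n : ℕ) : MeasurableSet[𝓕 n] (⋂ k < n, A k) :=
    .biInter (to_countable _) fun k hk ↦ 𝓕.mono (le_of_lt hk) _ (hA k)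
  refine supermartingale_nat (fun n ↦ (hV n).indicator (hC n))
    (fun n ↦ (hVint n).indicator (𝓕.le n _ (hC n))) fun n ↦ ?_
  rw [killedProcess_succ]
  filter_upwards [condExp_indicator ((hVint (n + 1)).indicator (𝓕.le n _ (hA n))) (hC n),
    hsuper n] with ω hω hle
  rw [hω]
  exact indicator_le_indicator hle

end KilledProcess

/-- **Lemma (stopping-time argument for almost-supermartingales).** Let `(F_n)` be a filtration,
`(A_n)` adapted events and `(V_n)` an adapted nonnegative sequence with `V_0 = 1` and
`E[V_n 1_{A_{n−1}} | F_{n−1}] ≤ V_{n−1}`. Then for any `δ > 0`,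
`P((⋃_{n≥1} {V_n > δ⁻¹}) ∪ (⋃_{n≥0} A_nᶜ)) ≤ δ + P(⋃_{n≥0} A_nᶜ)`. -/
theorem simultaneous_supermartingale_bound
    {Ω : Type*} {m0 : MeasurableSpace Ω} (μ : Measure Ω) [IsProbabilityMeasure μ]
    (𝓕 : Filtration ℕ m0) (A : ℕ → Set Ω)
    (hA : ∀ n, MeasurableSet[𝓕 n] (A n))
    (V : ℕ → Ω → ℝ)
    (hVadapt : ∀ n, StronglyMeasurable[𝓕 n] (V n))
    (hVint : ∀ n, Integrable (V n) μ)
    (hV0 : ∀ᵐ ω ∂μ, V 0 ω = 1)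
    (hVnonneg : ∀ n, ∀ᵐ ω ∂μ, 0 ≤ V n ω)
    (hsuper : ∀ n ≥ 1, μ[(A (n - 1)).indicator (V n)|𝓕 (n - 1)] ≤ᵐ[μ] V (n - 1))
    (δ : ℝ) (hδ : 0 < δ) :
    μ ((⋃ n ≥ 1, {ω | δ⁻¹ < V n ω}) ∪ ⋃ n, (A n)ᶜ)
      ≤ ENNReal.ofReal δ + μ (⋃ n, (A n)ᶜ) := by
  have hW := supermartingale_killedProcess hA hVadapt hVint fun n ↦ hsuper (n + 1) le_add_self
  have hW0 : μ[killedProcess A V 0] = 1 := by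
    rw [killedProcess_zero, integral_congr_ae hV0]
    simp
  have hville := hW.measure_exists_le_le (killedProcess_nonneg hVnonneg) (inv_pos.mpr hδ)
  rw [hW0, one_div, inv_inv] at hville
  have hsub : (⋃ n ≥ 1, {ω | δ⁻¹ < V n ω}) ∪ ⋃ n, (A n)ᶜ ⊆
      {ω | ∃ n, δ⁻¹ ≤ killedProcess A V n ω} ∪ ⋃ n, (A n)ᶜ := by
    rintro ω (hω | hω)
    · by_cases hA' : ∀ k, ω ∈ A k
      · obtain ⟨n, -, hn⟩ := mem_iUnion₂.mp hω
        exact .inl ⟨n, (killedProcess_apply_of_forall_mem hA' n).symm ▸ hn.le⟩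
      · exact .inr (mem_iUnion.mpr (not_forall.mp hA'))
    · exact .inr hω
  calc _ ≤ _ := measure_mono hsub
    _ ≤ _ := measure_union_le _ _
    _ ≤ _ := by gcongr
end

section
/- Let d ≥ 1, k ≥ 0, n ≥ 1. Let (X_t)_{k<t≤k+n} be vectors in ℝ^d with ‖X_t‖ ≤ D_X, let (c_t)_{k<t≤k+n} be reals with 0 ≤ c_t ≤ h, let P_{k+1} be a positive definite d×d matrix, and define P_{t+1}⁻¹ = P_t⁻¹ + c_t·X_tX_tᵀ for k < t ≤ k+n. Then Σ_{t=k+1}^{k+n} Tr( P_{t+1}·(P_{t+1}⁻¹ − P_t⁻¹) ) ≤ d·ln( 1 + n·h·λ_max(P_{k+1})·D_X²/d ). -/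
/-!
Write `G_t = P_t⁻¹`, so that `G_{t+1} = G_t + c_t X_t X_tᵀ` is a rank-one update. By the matrix
determinant lemma and Sherman–Morrison, the `t`-th trace equals `s / (1 + s) ≤ log (1 + s)
= log det G_{t+1} - log det G_t`, where `s = c_t X_tᵀ P_t X_t`. The sum therefore telescopes to
`log det (P_{k+1} G_{k+n+1})`, and AM–GM on the (positive) eigenvalues of this product bounds it by
`d log (tr (P_{k+1} G_{k+n+1}) / d)`. Finally `tr (P_{k+1} G_{k+n+1}) = d + ∑ c_t X_tᵀ P_{k+1} X_t
≤ d + n h λ_max(P_{k+1}) D_X²`.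
-/

open MeasureTheory ProbabilityTheory Matrix Real
open scoped ENNReal

lemma dotProduct_self_le_sq_of_euclNorm_le {d : ℕ} {x : Fin d → ℝ} {r : ℝ}
    (hx : euclNorm x ≤ r) : x ⬝ᵥ x ≤ r ^ 2 := by
  have hsq : x ⬝ᵥ x = euclNorm x ^ 2 := by
    rw [euclNorm, Real.sq_sqrt (by positivity)]
    simp [dotProduct, sq]
  exact hsq ▸ pow_le_pow_left₀ (Real.sqrt_nonneg _) hx 2

namespace Matrix

section RankOneUpdate

variable {ι K : Type*} [Fintype ι] [DecidableEq ι]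

lemma det_add_vecMulVec [CommRing K] {G : Matrix ι ι K} (hG : IsUnit G.det) (u v : ι → K) :
    det (G + vecMulVec u v) = det G * (1 + v ⬝ᵥ G⁻¹ *ᵥ u) := by
  have hfactor : G + vecMulVec u v = G * (1 + vecMulVec (G⁻¹ *ᵥ u) v) := by
    rw [Matrix.mul_add, Matrix.mul_one, mul_vecMulVec, mulVec_mulVec, mul_nonsing_inv G hG,
      one_mulVec]
  rw [hfactor, det_mul, vecMulVec_eq Unit, det_one_add_replicateCol_mul_replicateRow]

/-- Sherman–Morrison formula, applied to `u`. -/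
lemma inv_add_vecMulVec_mulVec [Field K] {G : Matrix ι ι K} (hG : IsUnit G.det) (u v : ι → K)
    (hs : 1 + v ⬝ᵥ G⁻¹ *ᵥ u ≠ 0) :
    (G + vecMulVec u v)⁻¹ *ᵥ u = (1 + v ⬝ᵥ G⁻¹ *ᵥ u)⁻¹ • G⁻¹ *ᵥ u := by
  have hH : IsUnit (G + vecMulVec u v).det := by
    rw [det_add_vecMulVec hG, IsUnit.mul_iff]
    exact ⟨hG, hs.isUnit⟩
  have hHG : (G + vecMulVec u v) *ᵥ (G⁻¹ *ᵥ u) = (1 + v ⬝ᵥ G⁻¹ *ᵥ u) • u := by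
    rw [add_mulVec, mulVec_mulVec, mul_nonsing_inv G hG, one_mulVec, vecMulVec_mulVec]
    simp [add_smul]
  calc (G + vecMulVec u v)⁻¹ *ᵥ u
      = (1 + v ⬝ᵥ G⁻¹ *ᵥ u)⁻¹ • (G + vecMulVec u v)⁻¹ *ᵥ ((1 + v ⬝ᵥ G⁻¹ *ᵥ u) • u) := by
        rw [mulVec_smul, inv_smul_smul₀ hs]
    _ = (1 + v ⬝ᵥ G⁻¹ *ᵥ u)⁻¹ • G⁻¹ *ᵥ u := by
        rw [← hHG, mulVec_mulVec, nonsing_inv_mul _ hH, one_mulVec]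

/-- With `s = c xᵀ G⁻¹ x ≥ 0`, the left side is `s / (1 + s)` and the right side `log (1 + s)`. -/
lemma PosDef.trace_inv_add_smul_vecMulVec_mul_le {G : Matrix ι ι ℝ} (hG : G.PosDef) {c : ℝ}
    (hc : 0 ≤ c) (x : ι → ℝ) :
    trace ((G + c • vecMulVec x x)⁻¹ * (c • vecMulVec x x))
      ≤ Real.log (det (G + c • vecMulVec x x)) - Real.log (det G) := by
  have hGdet : IsUnit G.det := hG.det_pos.ne'.isUnit
  set s := x ⬝ᵥ G⁻¹ *ᵥ (c • x)
  have hs : 0 ≤ s := by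
    simpa [s, mulVec_smul] using mul_nonneg hc (hG.inv.posSemidef.dotProduct_mulVec_nonneg x)
  have hs1 : (0 : ℝ) < 1 + s := by linarith
  rw [← smul_vecMulVec, det_add_vecMulVec hGdet, Real.log_mul hG.det_pos.ne' hs1.ne',
    mul_vecMulVec, trace_vecMulVec, inv_add_vecMulVec_mulVec hGdet _ _ hs1.ne', dotProduct_comm,
    dotProduct_smul, smul_eq_mul, add_sub_cancel_left]
  calc (1 + s)⁻¹ * s = 1 - (1 + s)⁻¹ := by field_simp; ring
    _ ≤ Real.log (1 + s) := Real.one_sub_inv_le_log_of_pos hs1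

end RankOneUpdate

section LogDet

variable {ι : Type*} [Fintype ι] [DecidableEq ι]

/-- AM–GM for the eigenvalues, via the tangent line `log λ ≤ log m + λ / m - 1` at
`m = T / card ι`. -/
lemma PosDef.log_det_le_of_trace_le {M : Matrix ι ι ℝ} (hM : M.PosDef) {T : ℝ}
    (hT : trace M ≤ T) : Real.log (det M) ≤ Fintype.card ι * Real.log (T / Fintype.card ι) := by
  rcases isEmpty_or_nonempty ι with _ | _
  · simp
  have hcard : (0 : ℝ) < Fintype.card ι := by exact_mod_cast Fintype.card_pos
  have heig : ∀ i, 0 < hM.1.eigenvalues i := hM.eigenvalues_pos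
  have htrace : trace M = ∑ i, hM.1.eigenvalues i := by simpa using hM.1.trace_eq_sum_eigenvalues
  set m := T / Fintype.card ι
  have hT0 : 0 < T :=
    (htrace ▸ Finset.sum_pos (fun i _ => heig i) Finset.univ_nonempty).trans_le hT
  have hm : 0 < m := div_pos hT0 hcard
  have htangent : ∀ i, Real.log (hM.1.eigenvalues i) ≤ Real.log m + hM.1.eigenvalues i / m - 1 := by
    intro i
    have := Real.log_le_sub_one_of_pos (div_pos (heig i) hm)
    rw [Real.log_div (heig i).ne' hm.ne'] at this
    linarith
  calc Real.log (det M) = ∑ i, Real.log (hM.1.eigenvalues i) := by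
        rw [hM.1.det_eq_prod_eigenvalues]
        simpa using Real.log_prod (fun i _ => (heig i).ne')
    _ ≤ ∑ i, (Real.log m + hM.1.eigenvalues i / m - 1) := Finset.sum_le_sum fun i _ => htangent i
    _ = Fintype.card ι * Real.log m + (trace M / m - Fintype.card ι) := by
        rw [htrace, Finset.sum_div, Finset.sum_sub_distrib, Finset.sum_add_distrib]
        simp only [Finset.sum_const, Finset.card_univ, nsmul_eq_mul, mul_one]
        ring
    _ ≤ Fintype.card ι * Real.log m := by
        have hTm : T / m = Fintype.card ι := div_div_cancel₀ hT0.ne'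
        linarith [div_le_div_of_nonneg_right hT hm.le]

open scoped MatrixOrder in
/-- `A C` has the determinant and trace of the positive definite `B C Bᴴ`, where `A = Bᴴ B`. -/
lemma PosDef.log_det_mul_le_of_trace_le {A C : Matrix ι ι ℝ} (hA : A.PosDef) (hC : C.PosDef)
    {T : ℝ} (hT : trace (A * C) ≤ T) :
    Real.log (det (A * C)) ≤ Fintype.card ι * Real.log (T / Fintype.card ι) := by
  obtain ⟨B, rfl⟩ := CStarAlgebra.nonneg_iff_eq_star_mul_self.mp hA.posSemidef.nonneg
  have hB : IsUnit B := by
    rw [isUnit_iff_isUnit_det]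
    exact isUnit_of_mul_isUnit_right (det_mul (star B) B ▸ hA.det_pos.ne'.isUnit)
  have hBCB : (B * C * Bᴴ).PosDef :=
    hC.mul_mul_conjTranspose_same (vecMul_injective_iff_isUnit.mpr hB)
  have hdet : det (B * C * Bᴴ) = det (star B * B * C) := by
    simp only [det_mul, star_eq_conjTranspose]; ring
  have htrace : trace (B * C * Bᴴ) = trace (star B * B * C) := by
    rw [trace_mul_cycle, star_eq_conjTranspose]
  rw [← hdet]
  exact hBCB.log_det_le_of_trace_le (htrace ▸ hT)

end LogDet

section LambdaMax

variable {d : ℕ}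

lemma mem_spectrum_iff_exists_mulVec_eq_smul {M : Matrix (Fin d) (Fin d) ℝ} {r : ℝ} :
    r ∈ spectrum ℝ M ↔ ∃ v : Fin d → ℝ, v ≠ 0 ∧ M *ᵥ v = r • v := by
  rw [← spectrum_toLin', ← Module.End.hasEigenvalue_iff_mem_spectrum]
  constructor
  · intro h
    obtain ⟨v, hv⟩ := h.exists_hasEigenvector
    exact ⟨v, hv.2, by simpa using Module.End.mem_eigenspace_iff.mp hv.1⟩
  · rintro ⟨v, hv, hMv⟩
    exact Module.End.hasEigenvalue_of_hasEigenvector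
      ⟨Module.End.mem_eigenspace_iff.mpr (by simpa using hMv), hv⟩

lemma lambdaMax_eq_sSup_spectrum (M : Matrix (Fin d) (Fin d) ℝ) :
    lambdaMax M = sSup (spectrum ℝ M) := by
  unfold lambdaMax
  congr 1
  ext r
  exact mem_spectrum_iff_exists_mulVec_eq_smul.symm

lemma le_lambdaMax {M : Matrix (Fin d) (Fin d) ℝ} {r : ℝ} (hr : r ∈ spectrum ℝ M) :
    r ≤ lambdaMax M := by
  rw [lambdaMax_eq_sSup_spectrum]
  exact le_csSup (finite_real_spectrum (A := M)).bddAbove hr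

lemma PosSemidef.lambdaMax_nonneg {M : Matrix (Fin d) (Fin d) ℝ} (hM : M.PosSemidef) :
    0 ≤ lambdaMax M := by
  rw [lambdaMax_eq_sSup_spectrum, hM.1.spectrum_real_eq_range_eigenvalues]
  exact Real.sSup_nonneg (Set.forall_mem_range.mpr hM.eigenvalues_nonneg)

open scoped MatrixOrder in
lemma IsHermitian.dotProduct_mulVec_le_lambdaMax_mul {M : Matrix (Fin d) (Fin d) ℝ}
    (hM : M.IsHermitian) (x : Fin d → ℝ) :
    x ⬝ᵥ M *ᵥ x ≤ lambdaMax M * (x ⬝ᵥ x) := by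
  have hle : M ≤ algebraMap ℝ _ (lambdaMax M) :=
    le_algebraMap_of_spectrum_le (fun r hr => le_lambdaMax hr) hM.isSelfAdjoint
  have := (Matrix.le_iff.mp hle).dotProduct_mulVec_nonneg x
  simp only [Algebra.algebraMap_eq_smul_one, sub_mulVec, smul_mulVec, one_mulVec, dotProduct_sub,
    dotProduct_smul, smul_eq_mul, star_trivial] at this
  linarith

lemma PosSemidef.dotProduct_mulVec_le_lambdaMax_mul_sq {B : Matrix (Fin d) (Fin d) ℝ}
    (hB : B.PosSemidef) {x : Fin d → ℝ} {r : ℝ} (hx : euclNorm x ≤ r) :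
    x ⬝ᵥ B *ᵥ x ≤ lambdaMax B * r ^ 2 :=
  (hB.1.dotProduct_mulVec_le_lambdaMax_mul x).trans
    (mul_le_mul_of_nonneg_left (dotProduct_self_le_sq_of_euclNorm_le hx) hB.lambdaMax_nonneg)

end LambdaMax

end Matrix

lemma Finset.sum_Icc_sub' {M : Type*} [AddCommGroup M] (f : ℕ → M) {m n : ℕ} (hmn : m ≤ n + 1) :
    ∑ i ∈ Finset.Icc m n, (f (i + 1) - f i) = f (n + 1) - f m := by
  rw [← Finset.Ico_add_one_right_eq_Icc, Finset.sum_Ico_sub f hmn]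

section InverseRecursion

variable {ι : Type*} [Fintype ι] [DecidableEq ι] {P : ℕ → Matrix ι ι ℝ} {X : ℕ → ι → ℝ}
  {c : ℕ → ℝ} {k n : ℕ}

lemma inv_sub_inv_eq_sum_smul_vecMulVec
    (hrec : ∀ t ∈ Finset.Icc (k + 1) (k + n),
      (P (t + 1))⁻¹ = (P t)⁻¹ + c t • vecMulVec (X t) (X t)) :
    (P (k + n + 1))⁻¹ - (P (k + 1))⁻¹
      = ∑ t ∈ Finset.Icc (k + 1) (k + n), c t • vecMulVec (X t) (X t) := by
  rw [← Finset.sum_Icc_sub' (fun t => (P t)⁻¹) (by omega)]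
  exact Finset.sum_congr rfl fun t ht => by rw [hrec t ht, add_sub_cancel_left]

lemma sum_trace_mul_inv_sub_inv_le_log_det
    (hc : ∀ t ∈ Finset.Icc (k + 1) (k + n), 0 ≤ c t)
    (hPD : ∀ t ∈ Finset.Icc (k + 1) (k + n + 1), (P t).PosDef)
    (hrec : ∀ t ∈ Finset.Icc (k + 1) (k + n),
      (P (t + 1))⁻¹ = (P t)⁻¹ + c t • vecMulVec (X t) (X t)) :
    ∑ t ∈ Finset.Icc (k + 1) (k + n), trace (P (t + 1) * ((P (t + 1))⁻¹ - (P t)⁻¹))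
      ≤ Real.log (det (P (k + 1) * (P (k + n + 1))⁻¹)) := by
  have hstep : ∀ t ∈ Finset.Icc (k + 1) (k + n),
      trace (P (t + 1) * ((P (t + 1))⁻¹ - (P t)⁻¹))
        ≤ Real.log (det (P (t + 1))⁻¹) - Real.log (det (P t)⁻¹) := fun t ht => by
    have hPt := hPD t (by simp at ht ⊢; omega)
    have hPt1 := hPD (t + 1) (by simp at ht ⊢; omega)
    have hP_eq : P (t + 1) = ((P t)⁻¹ + c t • vecMulVec (X t) (X t))⁻¹ := by
      rw [← hrec t ht, nonsing_inv_nonsing_inv _ hPt1.det_pos.ne'.isUnit]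
    rw [hrec t ht, add_sub_cancel_left, hP_eq]
    exact hPt.inv.trace_inv_add_smul_vecMulVec_mul_le (hc t ht) _
  have hfirst := hPD (k + 1) (by simp)
  have hlast := hPD (k + n + 1) (by simp)
  calc _ ≤ ∑ t ∈ Finset.Icc (k + 1) (k + n),
          (Real.log (det (P (t + 1))⁻¹) - Real.log (det (P t)⁻¹)) := Finset.sum_le_sum hstep
    _ = Real.log (det (P (k + 1) * (P (k + n + 1))⁻¹)) := by
      rw [Finset.sum_Icc_sub' (fun t => Real.log (det (P t)⁻¹)) (by omega), det_mul,
        Real.log_mul hfirst.det_pos.ne' hlast.inv.det_pos.ne', det_nonsing_inv (P (k + 1)),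
        Ring.inverse_eq_inv, Real.log_inv]
      ring

end InverseRecursion

lemma trace_mul_inv_le_of_recursion {d k n : ℕ} {X : ℕ → Fin d → ℝ} {c : ℕ → ℝ} {DX h : ℝ}
    {P : ℕ → Matrix (Fin d) (Fin d) ℝ}
    (hX : ∀ t ∈ Finset.Icc (k + 1) (k + n), euclNorm (X t) ≤ DX)
    (hc : ∀ t ∈ Finset.Icc (k + 1) (k + n), 0 ≤ c t ∧ c t ≤ h)
    (hfirst : (P (k + 1)).PosDef)
    (hrec : ∀ t ∈ Finset.Icc (k + 1) (k + n),
      (P (t + 1))⁻¹ = (P t)⁻¹ + c t • vecMulVec (X t) (X t)) :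
    trace (P (k + 1) * (P (k + n + 1))⁻¹) ≤ d + n * h * lambdaMax (P (k + 1)) * DX ^ 2 := by
  have hterm : ∀ t ∈ Finset.Icc (k + 1) (k + n),
      trace (P (k + 1) * (c t • vecMulVec (X t) (X t)))
        ≤ h * (lambdaMax (P (k + 1)) * DX ^ 2) := by
    intro t ht
    obtain ⟨hc0, hch⟩ := hc t ht
    have hq0 : 0 ≤ X t ⬝ᵥ P (k + 1) *ᵥ X t := by
      simpa using hfirst.posSemidef.dotProduct_mulVec_nonneg (X t)
    rw [Matrix.mul_smul, trace_smul, mul_vecMulVec, trace_vecMulVec, smul_eq_mul, dotProduct_comm]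
    calc c t * (X t ⬝ᵥ P (k + 1) *ᵥ X t) ≤ h * (X t ⬝ᵥ P (k + 1) *ᵥ X t) :=
          mul_le_mul_of_nonneg_right hch hq0
      _ ≤ h * (lambdaMax (P (k + 1)) * DX ^ 2) := mul_le_mul_of_nonneg_left
          (hfirst.posSemidef.dotProduct_mulVec_le_lambdaMax_mul_sq (hX t ht)) (hc0.trans hch)
  rw [← add_sub_cancel (P (k + 1))⁻¹ (P (k + n + 1))⁻¹, inv_sub_inv_eq_sum_smul_vecMulVec hrec,
    Matrix.mul_add, mul_nonsing_inv _ hfirst.det_pos.ne'.isUnit, trace_add, trace_one,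
    Fintype.card_fin, Finset.mul_sum, trace_sum]
  have hsum := Finset.sum_le_sum hterm
  simp only [Finset.sum_const, Nat.card_Icc, nsmul_eq_mul] at hsum
  push_cast [show k + n + 1 - (k + 1) = n by omega] at hsum
  linarith

theorem sum_trace_log_bound_general {d : ℕ} (k n : ℕ)
    (X : ℕ → Fin d → ℝ) (c : ℕ → ℝ) (DX h : ℝ)
    (hX : ∀ t ∈ Finset.Icc (k + 1) (k + n), euclNorm (X t) ≤ DX)
    (hc : ∀ t ∈ Finset.Icc (k + 1) (k + n), 0 ≤ c t ∧ c t ≤ h)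
    (P : ℕ → Matrix (Fin d) (Fin d) ℝ)
    (hPD : ∀ t ∈ Finset.Icc (k + 1) (k + n + 1), (P t).PosDef)
    (hrec : ∀ t ∈ Finset.Icc (k + 1) (k + n),
      (P (t + 1))⁻¹ = (P t)⁻¹ + c t • vecMulVec (X t) (X t)) :
    ∑ t ∈ Finset.Icc (k + 1) (k + n),
        Matrix.trace (P (t + 1) * ((P (t + 1))⁻¹ - (P t)⁻¹))
      ≤ d * Real.log (1 + n * h * lambdaMax (P (k + 1)) * DX ^ 2 / d) := by
  have hfirst := hPD (k + 1) (by simp)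
  have hlast := hPD (k + n + 1) (by simp)
  calc _ ≤ Real.log (det (P (k + 1) * (P (k + n + 1))⁻¹)) :=
        sum_trace_mul_inv_sub_inv_le_log_det (fun t ht => (hc t ht).1) hPD hrec
    _ ≤ d * Real.log ((d + n * h * lambdaMax (P (k + 1)) * DX ^ 2) / d) := by
        simpa using hfirst.log_det_mul_le_of_trace_le hlast.inv
          (trace_mul_inv_le_of_recursion hX hc hfirst hrec)
    _ = d * Real.log (1 + n * h * lambdaMax (P (k + 1)) * DX ^ 2 / d) := by
        rcases eq_or_ne (d : ℝ) 0 with hd | hd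
        · simp [hd]
        · rw [add_div, div_self hd]

/-- **Lemma (telescoping trace bound).** Let `d ≥ 1`, `k ≥ 0`, `n ≥ 1`. For vectors
`X_t` with `‖X_t‖ ≤ D_X`, scalars `0 ≤ c_t ≤ h`, positive definite `P_{k+1}` and the recursion
`P_{t+1}⁻¹ = P_t⁻¹ + c_t X_t X_tᵀ` (with each `P_t` positive definite), one has
`∑_{t=k+1}^{k+n} Tr(P_{t+1}(P_{t+1}⁻¹ − P_t⁻¹)) ≤ d ln(1 + n h λ_max(P_{k+1}) D_X²/d)`. -/
theorem sum_trace_log_bound {d : ℕ} (hd : 1 ≤ d) (k n : ℕ) (hn : 1 ≤ n)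
    (X : ℕ → Fin d → ℝ) (c : ℕ → ℝ) (DX h : ℝ)
    (hX : ∀ t ∈ Finset.Icc (k + 1) (k + n), euclNorm (X t) ≤ DX)
    (hc : ∀ t ∈ Finset.Icc (k + 1) (k + n), 0 ≤ c t ∧ c t ≤ h)
    (P : ℕ → Matrix (Fin d) (Fin d) ℝ)
    (hPD : ∀ t ∈ Finset.Icc (k + 1) (k + n + 1), (P t).PosDef)
    (hrec : ∀ t ∈ Finset.Icc (k + 1) (k + n),
      (P (t + 1))⁻¹ = (P t)⁻¹ + c t • vecMulVec (X t) (X t)) :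
    ∑ t ∈ Finset.Icc (k + 1) (k + n),
        Matrix.trace (P (t + 1) * ((P (t + 1))⁻¹ - (P t)⁻¹))
      ≤ d * Real.log (1 + n * h * lambdaMax (P (k + 1)) * DX ^ 2 / d) :=
  sum_trace_log_bound_general k n X c DX h hX hc P hPD hrec
end
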